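/- arXiv:2301.05129 — 4 statements merged into one kernel-verified Lean document; each statement's English description precedes it below -/
import Mathlib

section
/- Let E and F be complex Banach spaces. For each n ∈ ℕ let f_n : E → F be a continuous homogeneous polynomial of degree n, i.e. f_n(x) = p_n(x, …, x) for some continuous n-linear map p_n : E^n → F (with f_0 a constant). Then the following are equivalent: (1) there exists a continuous function f : E → F such that for every x ∈ E the series Σ_{n=0}^∞ f_n(x) converges in F to f(x); (2) for every compact subset B ⊆ E the series Σ_{n=0}^∞ sup_{x ∈ B} ‖f_n(x)‖ converges. -/
/-!
For fixed `x`, homogeneity turns `∑ fₙ(z • x)` into the one-variable power series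
`∑ zⁿ • fₙ(x)`, which converges for every `z ∈ ℂ`; its sum `z ↦ g (z • x)` is therefore entire,
and Cauchy's estimate on the circle `|z| = 2` gives `‖fₙ(x)‖ ≤ M / 2ⁿ`, where `M` bounds `‖g‖` on
the compact set `closedBall 0 2 • B`. Conversely, normal convergence on compacts makes the sum
continuous on every compact set, hence continuous, since a metric space is compactly generated.
-/

open Filter Metric Topology NNReal Real

theorem tendsto_zero_of_tendsto_sum_range {G : Type*} [AddCommGroup G] [TopologicalSpace G]
    [IsTopologicalAddGroup G] {u : ℕ → G} {s : G}
    (h : Tendsto (fun N => ∑ n ∈ Finset.range N, u n) atTop (𝓝 s)) :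
    Tendsto u atTop (𝓝 0) := by
  simpa [Finset.sum_range_succ] using (h.comp (tendsto_add_atTop_nat 1)).sub h

theorem IsCompact.le_biSup_of_continuousOn {X : Type*} [TopologicalSpace X] {K : Set X}
    (hK : IsCompact K) {u : X → ℝ} (hu : ContinuousOn u K) {x : X} (hx : x ∈ K) :
    u x ≤ ⨆ y ∈ K, u y := by
  obtain ⟨C, hC⟩ := hK.bddAbove_image hu
  refine le_ciSup_of_le ⟨max C 0, ?_⟩ x (by rw [ciSup_pos hx])
  rintro _ ⟨y, rfl⟩
  exact Real.iSup_le (fun hy => (hC ⟨y, hy, rfl⟩).trans (le_max_left _ _)) (le_max_right _ _)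

theorem ContinuousMultilinearMap.map_diag_smul {𝕜 E F : Type*} [NontriviallyNormedField 𝕜]
    [NormedAddCommGroup E] [NormedSpace 𝕜 E] [NormedAddCommGroup F] [NormedSpace 𝕜 F]
    {n : ℕ} (p : ContinuousMultilinearMap 𝕜 (fun _ : Fin n => E) F) (c : 𝕜) (x : E) :
    p (fun _ => c • x) = c ^ n • p (fun _ => x) := by
  simpa using p.map_smul_univ (fun _ => c) (fun _ => x)

theorem hasFPowerSeriesOnBall_of_tendsto_sum_pow_smul {𝕜 F : Type*} [NontriviallyNormedField 𝕜]
    [NormedAddCommGroup F] [NormedSpace 𝕜 F] [CompleteSpace F] {a : ℕ → F} {φ : 𝕜 → F}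
    (hφ : ∀ z, Tendsto (fun N => ∑ n ∈ Finset.range N, z ^ n • a n) atTop (𝓝 (φ z))) :
    HasFPowerSeriesOnBall φ (fun n => ContinuousMultilinearMap.mkPiRing 𝕜 (Fin n) (a n)) 0 ⊤ := by
  set q : FormalMultilinearSeries 𝕜 𝕜 F := fun n =>
    ContinuousMultilinearMap.mkPiRing 𝕜 (Fin n) (a n)
  have hq : ∀ n z, q n (fun _ => z) = z ^ n • a n := fun n z => by simp [q]
  have hradius : q.radius = ⊤ := by
    refine ENNReal.eq_top_of_forall_nnreal_le fun ρ => ?_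
    obtain ⟨z, hz⟩ := NormedField.exists_lt_norm 𝕜 ρ
    have hterms := (tendsto_zero_of_tendsto_sum_range (hφ z)).norm
    refine le_trans ?_ (q.le_radius_of_tendsto (r := ‖z‖₊) (l := 0) ?_)
    · exact_mod_cast hz.le
    · simpa [q, norm_smul, mul_comm] using hterms
  have hsum := q.hasFPowerSeriesOnBall (hradius ▸ ENNReal.zero_lt_top)
  rw [hradius] at hsum
  convert hsum using 1
  funext z
  have := (hsum.hasSum (y := z) (by simp)).tendsto_sum_nat
  simp only [zero_add, hq] at this
  exact tendsto_nhds_unique (hφ z) this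

theorem norm_le_div_pow_of_tendsto_sum_pow_smul {F : Type*} [NormedAddCommGroup F]
    [NormedSpace ℂ F] [CompleteSpace F] {a : ℕ → F} {φ : ℂ → F} {r M : ℝ}
    (hφ : ∀ z, Tendsto (fun N => ∑ n ∈ Finset.range N, z ^ n • a n) atTop (𝓝 (φ z)))
    (hr : 0 < r) (hM : ∀ z ∈ sphere (0 : ℂ) r, ‖φ z‖ ≤ M) (n : ℕ) :
    ‖a n‖ ≤ M / r ^ n := by
  lift r to ℝ≥0 using hr.le
  have hq := hasFPowerSeriesOnBall_of_tendsto_sum_pow_smul hφ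
  have hdiff : Differentiable ℂ φ :=
    fun z => (hq.analyticAt_of_mem (by simp)).differentiableAt
  have hcauchy := hq.hasFPowerSeriesAt.eq_formalMultilinearSeries
    (hdiff.hasFPowerSeriesOnBall 0 (mod_cast hr)).hasFPowerSeriesAt
  have hint : ∫ θ in (0)..2 * π, ‖φ (circleMap 0 r θ)‖ ≤ M * (2 * π) := by
    refine (le_abs_self _).trans ?_
    simpa [abs_of_pos Real.two_pi_pos] using intervalIntegral.norm_integral_le_of_norm_le_const
      (a := 0) (b := 2 * π) (f := fun θ => ‖φ (circleMap 0 r θ)‖) (C := M)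
      (fun θ _ => by simpa using hM _ (circleMap_mem_sphere 0 r.2 θ))
  calc ‖a n‖ = ‖cauchyPowerSeries φ 0 r n‖ := by
        rw [← congrFun hcauchy n, ContinuousMultilinearMap.norm_mkPiRing]
    _ ≤ ((2 * π)⁻¹ * ∫ θ in (0)..2 * π, ‖φ (circleMap 0 r θ)‖) * |(r : ℝ)|⁻¹ ^ n :=
        norm_cauchyPowerSeries_le _ _ _ _
    _ ≤ M / r ^ n := by
        rw [NNReal.abs_eq, inv_pow, ← div_eq_mul_inv]
        gcongr
        rw [inv_mul_le_iff₀ Real.two_pi_pos]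
        linarith

theorem summable_iSup_norm_of_tendsto_sum_of_homogeneous {E F : Type*} [TopologicalSpace E]
    [SMul ℂ E] [ContinuousSMul ℂ E] [NormedAddCommGroup F] [NormedSpace ℂ F] [CompleteSpace F]
    {f : ℕ → E → F} (hhom : ∀ n (c : ℂ) x, f n (c • x) = c ^ n • f n x) {g : E → F}
    (hg : Continuous g)
    (hsum : ∀ x, Tendsto (fun N => ∑ n ∈ Finset.range N, f n x) atTop (𝓝 (g x)))
    {B : Set E} (hB : IsCompact B) :
    Summable fun n => ⨆ x ∈ B, ‖f n x‖ := by
  set K := (fun p : ℂ × E => p.1 • p.2) '' (closedBall (0 : ℂ) 2 ×ˢ B)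
  have hK : IsCompact K := ((isCompact_closedBall 0 2).prod hB).image continuous_smul
  set M := ⨆ y ∈ K, ‖g y‖
  have hM : 0 ≤ M := Real.iSup_nonneg fun _ => Real.iSup_nonneg fun _ => norm_nonneg _
  have hbound : ∀ n, ∀ x ∈ B, ‖f n x‖ ≤ M / 2 ^ n := by
    intro n x hx
    have hline : ∀ z : ℂ, Tendsto (fun N => ∑ n ∈ Finset.range N, z ^ n • f n x) atTop
        (𝓝 (g (z • x))) := fun z => by simpa only [hhom] using hsum (z • x)
    refine norm_le_div_pow_of_tendsto_sum_pow_smul hline two_pos (fun z hz => ?_) n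
    exact hK.le_biSup_of_continuousOn hg.norm.continuousOn
      ⟨(z, x), ⟨sphere_subset_closedBall hz, hx⟩, rfl⟩
  refine .of_nonneg_of_le (fun n => Real.iSup_nonneg fun _ => Real.iSup_nonneg fun _ =>
    norm_nonneg _) (fun n => Real.iSup_le (fun x => Real.iSup_le (hbound n x) (by positivity))
    (by positivity))
    (by simpa only [one_div_pow, mul_one_div] using summable_geometric_two.mul_left M)

theorem continuous_tsum_of_summable_iSup_norm {ι E F : Type*} [TopologicalSpace E]
    [CompactlyCoherentSpace E] [NormedAddCommGroup F] [CompleteSpace F] {f : ι → E → F}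
    (hf : ∀ i, Continuous (f i))
    (hS : ∀ B : Set E, IsCompact B → Summable fun i => ⨆ x ∈ B, ‖f i x‖) :
    Continuous fun x => ∑' i, f i x :=
  CompactlyCoherentSpace.isCoherentWith.continuous_iff.2 fun B hB =>
    continuousOn_tsum (fun i => (hf i).continuousOn) (hS B hB)
      fun i _ hx => hB.le_biSup_of_continuousOn (hf i).norm.continuousOn hx

theorem entire_iff_normal_convergence_on_compacts_general
    {E F : Type*} [NormedAddCommGroup E] [NormedSpace ℂ E]
    [NormedAddCommGroup F] [NormedSpace ℂ F] [CompleteSpace F]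
    (f : ℕ → E → F)
    (hf : ∀ n : ℕ, ∃ p : ContinuousMultilinearMap ℂ (fun _ : Fin n => E) F,
      ∀ x : E, f n x = p (fun _ => x)) :
    (∃ g : E → F, Continuous g ∧ ∀ x : E,
        Filter.Tendsto (fun N : ℕ => ∑ n ∈ Finset.range N, f n x)
          Filter.atTop (nhds (g x))) ↔
    (∀ B : Set E, IsCompact B → Summable fun n : ℕ => ⨆ x ∈ B, ‖f n x‖) := by
  choose p hp using hf
  have hcont : ∀ n, Continuous (f n) := fun n =>
    (continuous_congr (hp n)).2 (by fun_prop)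
  have hhom : ∀ n (c : ℂ) x, f n (c • x) = c ^ n • f n x := fun n c x => by
    simp only [hp, ContinuousMultilinearMap.map_diag_smul]
  constructor
  · rintro ⟨g, hg, hsum⟩ B hB
    exact summable_iSup_norm_of_tendsto_sum_of_homogeneous hhom hg hsum hB
  · intro hS
    have hsummable : ∀ x, Summable fun n => f n x := fun x =>
      .of_norm_bounded (hS {x} isCompact_singleton) fun n =>
        isCompact_singleton.le_biSup_of_continuousOn (hcont n).norm.continuousOn rfl
    exact ⟨fun x => ∑' n, f n x, continuous_tsum_of_summable_iSup_norm hcont hS,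
      fun x => (hsummable x).hasSum.tendsto_sum_nat⟩

/-- Let `E`, `F` be complex Banach spaces and for each `n` let `f n : E → F` be a continuous
homogeneous polynomial of degree `n` (i.e. `f n x = pₙ(x, …, x)` for some continuous `n`-linear
map `pₙ`).  Then the series `∑ₙ fₙ(x)` converges for every `x` to a continuous function `g` if
and only if `∑ₙ sup_{x ∈ B} ‖fₙ(x)‖ < ∞` for every compact subset `B ⊆ E`. -/
theorem entire_iff_normal_convergence_on_compacts
    {E F : Type*} [NormedAddCommGroup E] [NormedSpace ℂ E] [CompleteSpace E]
    [NormedAddCommGroup F] [NormedSpace ℂ F] [CompleteSpace F]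
    (f : ℕ → E → F)
    (hf : ∀ n : ℕ, ∃ p : ContinuousMultilinearMap ℂ (fun _ : Fin n => E) F,
      ∀ x : E, f n x = p (fun _ => x)) :
    (∃ g : E → F, Continuous g ∧ ∀ x : E,
        Filter.Tendsto (fun N : ℕ => ∑ n ∈ Finset.range N, f n x)
          Filter.atTop (nhds (g x))) ↔
    (∀ B : Set E, IsCompact B → Summable fun n : ℕ => ⨆ x ∈ B, ‖f n x‖) :=
  entire_iff_normal_convergence_on_compacts_general f hf
end

section
/- Let E and F be complex Banach spaces and for each n ∈ ℕ let β_n : E^n → F be a continuous symmetric n-linear map (β_0 ∈ F a constant). Then the series Σ_{n=0}^∞ sup_{x ∈ B} ‖β_n(x, …, x)‖ converges for every compact subset B ⊆ E if and only if the series Σ_{n=0}^∞ sup_{x_1, …, x_n ∈ B} ‖β_n(x_1, …, x_n)‖ converges for every compact subset B ⊆ E. -/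
/-!
The diagonal sup is at most the full sup over the same set. Conversely, for symmetric `β` the
polarization formula `2ⁿ n! β(x₁, …, xₙ) = ∑_{ε ∈ {±1}ⁿ} ε₁⋯εₙ β(y_ε, …, y_ε)`, `y_ε = ∑ⱼ εⱼ xⱼ`,
gives `‖β(x₁, …, xₙ)‖ ≤ nⁿ / n! · sup_ε ‖β(y_ε / n, …, y_ε / n)‖`, and `y_ε / n` lies in the
absolutely convex hull of `{x₁, …, xₙ}`. As `nⁿ / n! ≤ eⁿ`, the full sup over `B` is at most the
diagonal sup over `K = closedAbsConvexHull ℝ ({0} ∪ e • B)`, which is compact since `E` is complete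
and does not depend on `n`. The point `0` is added so that `K` is nonempty even for `B = ∅`, where
the `n = 0` full sup is `‖β₀‖` rather than the junk value `0`.
-/

open Finset Pointwise

namespace Real

variable {ι : Sort*} {κ : ι → Sort*} {f : ∀ i, κ i → ℝ}

theorem iSup₂_nonneg (hf : ∀ i j, 0 ≤ f i j) : 0 ≤ ⨆ (i) (j), f i j :=
  iSup_nonneg fun i => iSup_nonneg (hf i)

theorem iSup₂_le {a : ℝ} (hf : ∀ i j, f i j ≤ a) (ha : 0 ≤ a) : ⨆ (i) (j), f i j ≤ a :=
  Real.iSup_le (fun i => Real.iSup_le (hf i) ha) ha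

theorem pow_div_factorial_le_exp_one_pow (n : ℕ) : (n : ℝ) ^ n / n.factorial ≤ exp 1 ^ n := by
  rw [exp_one_pow]
  exact pow_div_factorial_le_exp _ n.cast_nonneg n

end Real

theorem IsCompact.le_biSup {X : Type*} [TopologicalSpace X] {f : X → ℝ} {s : Set X}
    (hs : IsCompact s) (hf : ContinuousOn f s) {x : X} (hx : x ∈ s) : f x ≤ ⨆ y ∈ s, f y := by
  obtain ⟨M, hM⟩ := hs.bddAbove_image hf
  refine le_ciSup₂ (f := fun y (_ : y ∈ s) => f y) ⟨M, ?_⟩ x hx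
  rintro _ ⟨_, ⟨y, rfl⟩, ⟨hy, rfl⟩⟩
  exact hM ⟨y, hy, rfl⟩

theorem IsCompact.closedAbsConvexHull {E : Type*} [NormedAddCommGroup E] [NormedSpace ℝ E]
    [CompleteSpace E] {s : Set E} (hs : IsCompact s) : IsCompact (closedAbsConvexHull ℝ s) :=
  isCompact_closedAbsConvexHull_of_totallyBounded hs.totallyBounded

section Polarization

def boolSign {R : Type*} [One R] [Neg R] (b : Bool) : R := if b then 1 else -1

variable {R : Type*} [CommRing R]

@[simp] lemma boolSign_true : (boolSign true : R) = 1 := rfl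

@[simp] lemma boolSign_false : (boolSign false : R) = -1 := rfl

lemma boolSign_not (b : Bool) : (boolSign (!b) : R) = -boolSign b := by
  cases b <;> simp

@[simp] lemma boolSign_mul_self (b : Bool) : (boolSign b : R) * boolSign b = 1 := by
  cases b <;> simp

@[simp] lemma abs_boolSign [LinearOrder R] [IsStrictOrderedRing R] (b : Bool) :
    |(boolSign b : R)| = 1 := by
  cases b <;> simp

variable {ι : Type*} [Fintype ι] [DecidableEq ι]

lemma sum_prod_boolSign_mul_prod_boolSign_perm (σ : Equiv.Perm ι) :
    ∑ ε : ι → Bool, (∏ i, (boolSign (ε i) : R)) * ∏ i, boolSign (ε (σ i)) =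
      2 ^ Fintype.card ι := by
  have (ε : ι → Bool) : ∏ i, (boolSign (ε (σ i)) : R) = ∏ i, boolSign (ε i) :=
    Equiv.prod_comp σ fun i => boolSign (ε i)
  simp [this, ← prod_mul_distrib]

lemma sum_prod_boolSign_mul_prod_boolSign_comp_eq_zero {r : ι → ι} {k : ι}
    (hk : k ∉ Set.range r) :
    ∑ ε : ι → Bool, (∏ i, (boolSign (ε i) : R)) * ∏ i, boolSign (ε (r i)) = 0 := by
  let flip (ε : ι → Bool) : ι → Bool := Function.update ε k (!ε k)
  have hflip_comp (ε : ι → Bool) (i : ι) : flip ε (r i) = ε (r i) :=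
    Function.update_of_ne (fun h => hk ⟨i, h⟩) _ _
  have hflip (ε : ι → Bool) : ∏ i, (boolSign (flip ε i) : R) = -∏ i, boolSign (ε i) := by
    rw [Fintype.prod_eq_mul_prod_compl k, Fintype.prod_eq_mul_prod_compl k]
    simp only [flip, Function.update_self, boolSign_not, neg_mul]
    congr 2
    exact prod_congr rfl fun i hi => by rw [Function.update_of_ne (by simpa using hi)]
  refine sum_ninvolution flip (fun ε => ?_) (fun ε _ h => by simpa [flip] using congr_fun h k)
    (fun _ => mem_univ _) (fun ε => by simp [flip])
  simp only [hflip, hflip_comp]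
  ring

variable {M N : Type*} [AddCommGroup M] [Module R M] [AddCommGroup N] [Module R N]

theorem MultilinearMap.sum_boolSign_smul_map_sum_boolSign_smul
    (f : MultilinearMap R (fun _ : ι => M) N)
    (hf : ∀ (x : ι → M) (σ : Equiv.Perm ι), f (x ∘ σ) = f x) (x : ι → M) :
    ∑ ε : ι → Bool, (∏ i, boolSign (ε i) : R) • f (fun _ => ∑ j, (boolSign (ε j) : R) • x j) =
      (2 ^ Fintype.card ι * (Fintype.card ι).factorial) • f x := by
  have hexpand (ε : ι → Bool) : f (fun _ => ∑ j, (boolSign (ε j) : R) • x j) =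
      ∑ r : ι → ι, (∏ i, (boolSign (ε (r i)) : R)) • f (x ∘ r) := by
    rw [f.map_sum]
    exact sum_congr rfl fun r _ => f.map_smul_univ _ (x ∘ r)
  have hnonperm (r : ι → ι) (hr : r ∉ Set.range ((⇑) : Equiv.Perm ι → ι → ι)) :
      (∑ ε : ι → Bool, (∏ i, (boolSign (ε i) : R)) * ∏ i, boolSign (ε (r i))) • f (x ∘ r) = 0 := by
    obtain ⟨k, hk⟩ := not_forall.mp fun h : r.Surjective =>
      hr ⟨Equiv.ofBijective r ⟨Finite.injective_iff_surjective.mpr h, h⟩, rfl⟩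
    rw [sum_prod_boolSign_mul_prod_boolSign_comp_eq_zero (by simpa using hk), zero_smul]
  calc ∑ ε : ι → Bool, (∏ i, boolSign (ε i) : R) • f (fun _ => ∑ j, (boolSign (ε j) : R) • x j)
      = ∑ r : ι → ι,
          (∑ ε : ι → Bool, (∏ i, (boolSign (ε i) : R)) * ∏ i, boolSign (ε (r i))) • f (x ∘ r) := by
        simp only [hexpand, smul_sum, smul_smul, sum_smul]
        exact sum_comm
    _ = ∑ σ : Equiv.Perm ι, (2 : R) ^ Fintype.card ι • f x := by
        refine (Fintype.sum_of_injective _ DFunLike.coe_injective _ _ hnonperm fun σ => ?_).symm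
        rw [sum_prod_boolSign_mul_prod_boolSign_perm, hf]
    _ = (2 ^ Fintype.card ι * (Fintype.card ι).factorial) • f x := by
        rw [sum_const, card_univ, Fintype.card_perm, mul_comm, mul_smul,
          ← Nat.cast_smul_eq_nsmul R (2 ^ _), Nat.cast_pow, Nat.cast_ofNat]

end Polarization

section Estimate

variable {ι E F : Type*} [Fintype ι]
  [NormedAddCommGroup E] [NormedSpace ℝ E] [NormedAddCommGroup F] [NormedSpace ℝ F]

lemma ContinuousMultilinearMap.map_smul_diag (β : ContinuousMultilinearMap ℝ (fun _ : ι => E) F)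
    (c : ℝ) (y : E) : β (fun _ => c • y) = c ^ Fintype.card ι • β (fun _ => y) := by
  rw [β.map_smul_univ (fun _ => c), prod_const, card_univ]

theorem inv_card_smul_sum_boolSign_smul_mem_absConvexHull {B : Set E} {x : ι → E}
    (hx : ∀ i, x i ∈ B) (ε : ι → Bool) :
    (Fintype.card ι : ℝ)⁻¹ • ∑ j, (boolSign (ε j) : ℝ) • x j ∈ absConvexHull ℝ (insert 0 B) := by
  rcases isEmpty_or_nonempty ι with hι | hι
  · simpa using subset_absConvexHull (Set.mem_insert 0 B)
  rw [smul_sum]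
  refine absConvex_absConvexHull.2.sum_mem (fun _ _ => by positivity) ?_ fun j _ => ?_
  · simp [card_univ]
  · rw [balanced_absConvexHull.smul_mem_iff (b := 1) (by simp), one_smul]
    exact subset_absConvexHull (Set.mem_insert_of_mem 0 (hx j))

theorem ContinuousMultilinearMap.norm_le_pow_div_factorial_mul [DecidableEq ι]
    (β : ContinuousMultilinearMap ℝ (fun _ : ι => E) F)
    (hβ : ∀ (x : ι → E) (σ : Equiv.Perm ι), β (x ∘ σ) = β x) (x : ι → E) {D : ℝ}
    (hD : ∀ ε : ι → Bool,
      ‖β (fun _ => (Fintype.card ι : ℝ)⁻¹ • ∑ j, (boolSign (ε j) : ℝ) • x j)‖ ≤ D) :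
    ‖β x‖ ≤ (Fintype.card ι : ℝ) ^ Fintype.card ι / (Fintype.card ι).factorial * D := by
  set n := Fintype.card ι
  have hterm (ε : ι → Bool) :
      ‖β (fun _ => ∑ j, (boolSign (ε j) : ℝ) • x j)‖ ≤ (n : ℝ) ^ n * D := by
    have hv : ∑ j, (boolSign (ε j) : ℝ) • x j =
        (n : ℝ) • (n : ℝ)⁻¹ • ∑ j, (boolSign (ε j) : ℝ) • x j := by
      rcases isEmpty_or_nonempty ι with hι | hι
      · simp
      · rw [smul_inv_smul₀ (by positivity)]
    rw [hv, β.map_smul_diag, norm_smul, norm_pow, Real.norm_natCast]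
    gcongr
    exact hD ε
  have hpol := β.toMultilinearMap.sum_boolSign_smul_map_sum_boolSign_smul hβ x
  have hbound : (2 ^ n * n.factorial : ℝ) * ‖β x‖ ≤ 2 ^ n * ((n : ℝ) ^ n * D) := by
    calc (2 ^ n * n.factorial : ℝ) * ‖β x‖ = ‖(2 ^ n * n.factorial) • β x‖ := by
          rw [← Nat.cast_smul_eq_nsmul ℝ, norm_smul]; simp
      _ ≤ ∑ ε : ι → Bool, ‖β (fun _ => ∑ j, (boolSign (ε j) : ℝ) • x j)‖ := by
          rw [← ContinuousMultilinearMap.coe_coe, ← hpol]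
          refine (norm_sum_le _ _).trans_eq (sum_congr rfl fun ε _ => ?_)
          simp [norm_smul]
      _ ≤ ∑ _ε : ι → Bool, (n : ℝ) ^ n * D := sum_le_sum fun ε _ => hterm ε
      _ = 2 ^ n * ((n : ℝ) ^ n * D) := by simp [n]
  rw [div_mul_eq_mul_div, le_div_iff₀ (by positivity)]
  exact le_of_mul_le_mul_left (by linarith [hbound]) (by positivity : (0 : ℝ) < 2 ^ n)

theorem ContinuousMultilinearMap.iSup_norm_le_iSup_norm_diag [CompleteSpace E]
    (β : ContinuousMultilinearMap ℝ (fun _ : ι => E) F)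
    (hβ : ∀ (x : ι → E) (σ : Equiv.Perm ι), β (x ∘ σ) = β x) {B : Set E} (hB : IsCompact B) :
    ⨆ (x : ι → E) (_ : ∀ i, x i ∈ B), ‖β x‖ ≤
      ⨆ y ∈ closedAbsConvexHull ℝ (insert 0 (Real.exp 1 • B)), ‖β (fun _ => y)‖ := by
  classical
  set K := closedAbsConvexHull ℝ (insert 0 (Real.exp 1 • B))
  set D := ⨆ y ∈ K, ‖β (fun _ => y)‖
  have hD : 0 ≤ D := Real.iSup₂_nonneg fun _ _ => norm_nonneg _
  refine Real.iSup₂_le (fun x hx => ?_) hD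
  set n := Fintype.card ι
  have hscaled : ‖β (Real.exp 1 • x)‖ ≤ (n : ℝ) ^ n / n.factorial * D :=
    β.norm_le_pow_div_factorial_mul hβ _ fun ε =>
      ((hB.smul _).insert 0).closedAbsConvexHull.le_biSup
        (β.cont.comp (continuous_pi fun _ => continuous_id)).norm.continuousOn
        (absConvexHull_subset_closedAbsConvexHull
          (inv_card_smul_sum_boolSign_smul_mem_absConvexHull
            (fun i => Set.smul_mem_smul_set (hx i)) ε))
  have hscale : ‖β (Real.exp 1 • x)‖ = Real.exp 1 ^ n * ‖β x‖ := by
    rw [show Real.exp 1 • x = fun i => Real.exp 1 • x i from rfl, β.map_smul_univ, prod_const,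
      card_univ, norm_smul, norm_pow, Real.norm_of_nonneg (Real.exp_pos 1).le]
  refine le_of_mul_le_mul_left ?_ (by positivity : 0 < Real.exp 1 ^ n)
  calc Real.exp 1 ^ n * ‖β x‖ ≤ (n : ℝ) ^ n / n.factorial * D := hscale ▸ hscaled
    _ ≤ Real.exp 1 ^ n * D :=
      mul_le_mul_of_nonneg_right (Real.pow_div_factorial_le_exp_one_pow n) hD

end Estimate

theorem ContinuousMultilinearMap.iSup_norm_diag_le_iSup_norm {𝕜 ι E F : Type*}
    [NontriviallyNormedField 𝕜] [NormedAddCommGroup E] [NormedSpace 𝕜 E]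
    [NormedAddCommGroup F] [NormedSpace 𝕜 F]
    (β : ContinuousMultilinearMap 𝕜 (fun _ : ι => E) F) {B : Set E} (hB : IsCompact B) :
    ⨆ y ∈ B, ‖β (fun _ => y)‖ ≤ ⨆ (x : ι → E) (_ : ∀ i, x i ∈ B), ‖β x‖ :=
  Real.iSup₂_le (fun _ hy =>
    (isCompact_pi_infinite fun _ => hB).le_biSup (s := {x | ∀ i, x i ∈ B})
      β.cont.norm.continuousOn fun _ => hy) (Real.iSup₂_nonneg fun _ _ => norm_nonneg _)

theorem summable_diagonal_sup_iff_summable_full_sup_general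
    {E F : Type*} [NormedAddCommGroup E] [NormedSpace ℂ E] [CompleteSpace E]
    [NormedAddCommGroup F] [NormedSpace ℂ F]
    (β : ∀ n : ℕ, ContinuousMultilinearMap ℂ (fun _ : Fin n => E) F)
    (hsymm : ∀ (n : ℕ) (x : Fin n → E) (σ : Equiv.Perm (Fin n)), β n (x ∘ σ) = β n x) :
    (∀ B : Set E, IsCompact B → Summable fun n : ℕ => ⨆ x ∈ B, ‖β n (fun _ => x)‖) ↔
    (∀ B : Set E, IsCompact B →
      Summable fun n : ℕ => ⨆ (x : Fin n → E) (_ : ∀ i, x i ∈ B), ‖β n x‖) := by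
  refine ⟨fun hdiag B hB => ?_, fun hfull B hB => ?_⟩
  · exact (hdiag _ ((hB.smul _).insert 0).closedAbsConvexHull).of_nonneg_of_le
      (fun n => Real.iSup₂_nonneg fun _ _ => norm_nonneg _)
      fun n => ((β n).restrictScalars ℝ).iSup_norm_le_iSup_norm_diag (hsymm n) hB
  · exact (hfull B hB).of_nonneg_of_le (fun n => Real.iSup₂_nonneg fun _ _ => norm_nonneg _)
      fun n => (β n).iSup_norm_diag_le_iSup_norm hB

/-- Let `E`, `F` be complex Banach spaces and for each `n` let `βₙ : Eⁿ → F` be a continuous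
symmetric `n`-linear map.  Then `∑ₙ sup_{x ∈ B} ‖βₙ(x, …, x)‖` converges for every compact
`B ⊆ E` if and only if `∑ₙ sup_{x₁, …, xₙ ∈ B} ‖βₙ(x₁, …, xₙ)‖` converges for every compact
`B ⊆ E`. -/
theorem summable_diagonal_sup_iff_summable_full_sup
    {E F : Type*} [NormedAddCommGroup E] [NormedSpace ℂ E] [CompleteSpace E]
    [NormedAddCommGroup F] [NormedSpace ℂ F] [CompleteSpace F]
    (β : ∀ n : ℕ, ContinuousMultilinearMap ℂ (fun _ : Fin n => E) F)
    (hsymm : ∀ (n : ℕ) (x : Fin n → E) (σ : Equiv.Perm (Fin n)), β n (x ∘ σ) = β n x) :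
    (∀ B : Set E, IsCompact B → Summable fun n : ℕ => ⨆ x ∈ B, ‖β n (fun _ => x)‖) ↔
    (∀ B : Set E, IsCompact B →
      Summable fun n : ℕ => ⨆ (x : Fin n → E) (_ : ∀ i, x i ∈ B), ‖β n x‖) :=
  summable_diagonal_sup_iff_summable_full_sup_general β hsymm
end

section
/- Let 𝕜 be ℝ or ℂ and let V be a complete Hausdorff topological 𝕜-vector space whose topology is induced by a family 𝒫 of seminorms. Let α : ℝ → GL(V) be a one-parameter group of linear automorphisms of V (α_0 = id, α_{s+t} = α_s ∘ α_t) such that: (i) for every v ∈ V the orbit map t ↦ α_t(v) is continuous (strong continuity), and (ii) α has polynomial growth, i.e. for every p ∈ 𝒫 there is a monic polynomial r ∈ ℝ[t] with p(α_t(v)) ≤ r(|t|) · p(v) for all t ∈ ℝ and v ∈ V. Then the action map ℝ × V → V, (t, v) ↦ α_t(v), is jointly continuous. -/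
/-!
Polynomial growth makes the family `α t` locally equicontinuous in `t`: near `t₀` every
`p i ∘ α t` is bounded by `C ⬝ p i` with `C` slightly above `r(|t₀|)`.  Then
`α t v - α t₀ v₀ = α t (v - v₀) + (α t v₀ - α t₀ v₀)`, where the first term is small by this
uniform bound and the second by strong continuity.
-/

open Filter Topology

namespace WithSeminorms

variable {𝕜 E F X ι ι' : Type*} [NormedField 𝕜]
  [AddCommGroup E] [Module 𝕜 E] [TopologicalSpace E]
  [AddCommGroup F] [Module 𝕜 F] [TopologicalSpace F] [TopologicalSpace X]
  {p : SeminormFamily 𝕜 E ι} {q : SeminormFamily 𝕜 F ι'}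

theorem continuousAt_uncurry_of_eventually_seminorm_le (hp : WithSeminorms p)
    (hq : WithSeminorms q) (T : X → E →ₗ[𝕜] F) {x₀ : X} {v₀ : E}
    (hcont : ContinuousAt (fun x => T x v₀) x₀)
    (hbound : ∀ i, ∃ j, ∃ C > 0, ∀ᶠ x in 𝓝 x₀, ∀ v, q i (T x v) ≤ C * p j v) :
    ContinuousAt (fun z : X × E => T z.1 z.2) (x₀, v₀) := by
  rw [ContinuousAt, hq.tendsto_nhds]
  intro i ε hε
  obtain ⟨j, C, hC, hTC⟩ := hbound i
  have horbit : ∀ᶠ x in 𝓝 x₀, q i (T x v₀ - T x₀ v₀) < ε / 2 :=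
    (hq.tendsto_nhds _ _).1 hcont i _ (half_pos hε)
  have hnear : ∀ᶠ v in 𝓝 v₀, p j (v - v₀) < ε / 2 / C :=
    (hp.tendsto_nhds _ _).1 tendsto_id j _ (div_pos (half_pos hε) hC)
  filter_upwards [continuousAt_fst.eventually (hTC.and horbit), continuousAt_snd.eventually hnear]
    with ⟨x, v⟩ ⟨hxC, hxorbit⟩ hv
  have hsmall : q i (T x (v - v₀)) < ε / 2 :=
    calc q i (T x (v - v₀)) ≤ C * p j (v - v₀) := hxC _
      _ < C * (ε / 2 / C) := mul_lt_mul_of_pos_left hv hC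
      _ = ε / 2 := mul_div_cancel₀ _ hC.ne'
  calc q i (T x v - T x₀ v₀)
      = q i (T x (v - v₀) + (T x v₀ - T x₀ v₀)) := by rw [(T x).map_sub, sub_add_sub_cancel]
    _ ≤ q i (T x (v - v₀)) + q i (T x v₀ - T x₀ v₀) := map_add_le_add _ _ _
    _ < ε := by linarith

end WithSeminorms

theorem strongly_continuous_poly_growth_implies_jointly_continuous_general
    {𝕜 : Type*} [RCLike 𝕜] {V : Type*} [AddCommGroup V] [Module 𝕜 V]
    [UniformSpace V]
    {ι : Type*} (p : SeminormFamily 𝕜 V ι) (hp : WithSeminorms p)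
    (α : ℝ → V ≃ₗ[𝕜] V)
    (hcont : ∀ v : V, Continuous fun t : ℝ => α t v)
    (hgrowth : ∀ i : ι, ∃ r : Polynomial ℝ, r.Monic ∧
      ∀ (t : ℝ) (v : V), p i (α t v) ≤ r.eval |t| * p i v) :
    Continuous fun x : ℝ × V => α x.1 x.2 := by
  refine continuous_iff_continuousAt.2 fun ⟨t₀, v₀⟩ =>
    hp.continuousAt_uncurry_of_eventually_seminorm_le hp (fun t => (α t).toLinearMap)
      (hcont v₀).continuousAt fun i => ?_
  obtain ⟨r, -, hr⟩ := hgrowth i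
  have hr_cont : Continuous fun t : ℝ => r.eval |t| := r.continuous.comp continuous_abs
  have hr_lt : ∀ᶠ t in 𝓝 t₀, r.eval |t| < |(r.eval |t₀|)| + 1 :=
    hr_cont.continuousAt.eventually_lt continuousAt_const
      ((le_abs_self _).trans_lt (lt_add_one _))
  exact ⟨i, _, by positivity, hr_lt.mono fun t ht v =>
    (hr t v).trans (mul_le_mul_of_nonneg_right ht.le (apply_nonneg _ _))⟩

/-- Let `V` be a complete Hausdorff topological `𝕜`-vector space (`𝕜 = ℝ` or `ℂ`) whose
topology is induced by a family of seminorms `p`.  If `α : ℝ → GL(V)` is a one-parameter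
group of linear automorphisms that is strongly continuous and has polynomial growth (for
every seminorm `p i` there is a monic polynomial `r` with `p i (α t v) ≤ r(|t|) ⬝ p i v`),
then the action map `ℝ × V → V` is jointly continuous. -/
theorem strongly_continuous_poly_growth_implies_jointly_continuous
    {𝕜 : Type*} [RCLike 𝕜] {V : Type*} [AddCommGroup V] [Module 𝕜 V]
    [UniformSpace V] [IsUniformAddGroup V] [CompleteSpace V] [T2Space V]
    {ι : Type*} [Nonempty ι] (p : SeminormFamily 𝕜 V ι) (hp : WithSeminorms p)
    (α : ℝ → V ≃ₗ[𝕜] V)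
    (h0 : α 0 = LinearEquiv.refl 𝕜 V)
    (hgrp : ∀ s t : ℝ, ∀ v : V, α (s + t) v = α s (α t v))
    (hcont : ∀ v : V, Continuous fun t : ℝ => α t v)
    (hgrowth : ∀ i : ι, ∃ r : Polynomial ℝ, r.Monic ∧
      ∀ (t : ℝ) (v : V), p i (α t v) ≤ r.eval |t| * p i v) :
    Continuous fun x : ℝ × V => α x.1 x.2 :=
  strongly_continuous_poly_growth_implies_jointly_continuous_general p hp α hcont hgrowth
end

section
/- Let α be a strongly continuous, pointwise polynomially bounded one-parameter group on the complex Banach space V, and let v ∈ V. If α_f(v) = 0 for every Schwartz function f ∈ 𝒮(ℝ, ℂ), then v = 0. Consequently, if v ≠ 0 then Spec_α(v) ≠ ∅. -/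
open MeasureTheory Filter
open scoped Pointwise

namespace ArvesonPaper

/-- The Fourier transform `f̂(p) = ∫ f(t) e^{itp} dt` of a Schwartz function. -/
noncomputable def fourierT (f : SchwartzMap ℝ ℂ) (p : ℝ) : ℂ :=
  ∫ t : ℝ, f t * Complex.exp (Complex.I * (t : ℂ) * (p : ℂ))

variable {V : Type*} [NormedAddCommGroup V] [NormedSpace ℂ V]

/-- `α_f(v) = ∫ f(t) α_t(v) dt` (Bochner integral). -/
noncomputable def smear (α : ℝ → V →L[ℂ] V) (f : SchwartzMap ℝ ℂ) (v : V) : V :=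
  ∫ t : ℝ, f t • α t v

/-- A one-parameter group of (automatically invertible) continuous linear maps. -/
def IsOneParamGroup (α : ℝ → V →L[ℂ] V) : Prop :=
  α 0 = ContinuousLinearMap.id ℂ V ∧ ∀ s t : ℝ, α (s + t) = (α s).comp (α t)

/-- Strong continuity: each orbit map is continuous. -/
def StronglyCts (α : ℝ → V →L[ℂ] V) : Prop :=
  ∀ v : V, Continuous fun t : ℝ => α t v

/-- Pointwise polynomial boundedness of a one-parameter group. -/
def PtwisePolyBdd (α : ℝ → V →L[ℂ] V) : Prop :=
  ∀ v : V, ∃ C : ℝ, 0 < C ∧ ∃ N : ℕ, ∀ t : ℝ, ‖α t v‖ ≤ C * (1 + |t| ^ N)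

/-- Polynomial boundedness (in operator norm) of a one-parameter group. -/
def PolyBdd (α : ℝ → V →L[ℂ] V) : Prop :=
  ∃ C : ℝ, 0 < C ∧ ∃ N : ℕ, ∀ t : ℝ, ‖α t‖ ≤ C * (1 + |t| ^ N)

/-- The Arveson spectrum of a vector `v`. -/
def arvSpec (α : ℝ → V →L[ℂ] V) (v : V) : Set ℝ :=
  {p : ℝ | ∀ f : SchwartzMap ℝ ℂ, smear α f v = 0 → fourierT f p = 0}

/-- The Arveson spectrum of the whole representation. -/
def arvSpecFull (α : ℝ → V →L[ℂ] V) : Set ℝ :=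
  {p : ℝ | ∀ f : SchwartzMap ℝ ℂ, (∀ v : V, smear α f v = 0) → fourierT f p = 0}

/-- The spectral subspace `V(E)₀` of vectors with Arveson spectrum in `closure E`. -/
def specSub₀ (α : ℝ → V →L[ℂ] V) (E : Set ℝ) : Set V :=
  {v : V | arvSpec α v ⊆ closure E}

/-- The closed spectral subspace `V(E)`. -/
def specSub (α : ℝ → V →L[ℂ] V) (E : Set ℝ) : Set V :=
  closure (specSub₀ α E)

/-- The spectral subspace `V⁺(E) = ⋂_{ε>0} V(E + (−ε, ε))`. -/
def specSubPlus (α : ℝ → V →L[ℂ] V) (E : Set ℝ) : Set V :=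
  ⋂ ε > (0 : ℝ), specSub α (E + Set.Ioo (-ε) ε)

/-!
Dilating the inverse Fourier transform `φ` of a bump equal to `1` at the origin gives an
approximate identity `φₙ(t) = (n + 1) φ((n + 1) t)` with compactly supported Fourier transforms,
and `α_{φₙ}(v) → v` by dominated convergence (strong continuity plus the polynomial bound). Hence
`v = 0` as soon as `α_g(v) = 0` for every `g` with compactly supported `ĝ`.

If `Spec_α(v) = ∅`, the Fourier transforms of the `f` with `α_f(v) = 0` have no common zero.
These `f` form an ideal for convolution, because `α_{k ⋆ f}(v) = ∫ k(s) α_s(α_f(v)) ds`. On the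
compact support of `ĝ` finitely many `f̂ᵢ` have no common zero, so `ĝ = ∑ hᵢ f̂ᵢ` with
`hᵢ = ĝ conj(f̂ᵢ) / ∑ⱼ |f̂ⱼ|²`, i.e. `g = ∑ 𝓕⁻hᵢ ⋆ fᵢ` lies in the ideal.
-/

open scoped ContDiff Topology SchwartzMap FourierTransform

theorem _root_.SchwartzMap.integrable_one_add_norm_pow_mul {D W : Type*} [NormedAddCommGroup D]
    [NormedSpace ℝ D] [MeasurableSpace D] [BorelSpace D] [SecondCountableTopology D]
    [NormedAddCommGroup W] [NormedSpace ℝ W] {μ : Measure D} [μ.HasTemperateGrowth]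
    (f : SchwartzMap D W) (k : ℕ) :
    Integrable (fun x ↦ (1 + ‖x‖) ^ k * ‖f x‖) μ := by
  simp_rw [add_comm (1 : ℝ), add_pow, one_pow, mul_one, Finset.sum_mul]
  refine integrable_finsetSum _ fun i _ ↦ ?_
  exact ((f.integrable_pow_mul μ i).const_mul (k.choose i : ℝ)).congr (.of_forall fun x ↦ by ring)

theorem _root_.ContDiff.div_of_ne_zero_on_tsupport {E 𝕜 : Type*} [NormedAddCommGroup E]
    [NormedSpace ℝ E] [NormedField 𝕜] [NormedAlgebra ℝ 𝕜] {n : WithTop ℕ∞}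
    {f g : E → 𝕜}
    (hf : ContDiff ℝ n f) (hg : ContDiff ℝ n g) (hne : ∀ x ∈ tsupport f, g x ≠ 0) :
    ContDiff ℝ n (fun x ↦ f x / g x) := by
  refine contDiff_iff_contDiffAt.2 fun x ↦ ?_
  by_cases hx : x ∈ tsupport f
  · simp_rw [div_eq_mul_inv]
    exact hf.contDiffAt.mul (hg.contDiffAt.inv (hne x hx))
  · have hzero : (fun y ↦ f y / g y) =ᶠ[𝓝 x] fun _ ↦ 0 := by
      filter_upwards [(isClosed_tsupport f).isOpen_compl.mem_nhds hx] with y hy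
      rw [image_eq_zero_of_notMem_tsupport hy, zero_div]
    exact contDiffAt_const.congr_of_eventuallyEq hzero

theorem _root_.HasCompactSupport.exists_eq_sum_mul {E ι : Type*} [NormedAddCommGroup E]
    [NormedSpace ℝ E] {g : E → ℂ} (hgc : HasCompactSupport g) (hg : ContDiff ℝ ∞ g) {u : ι → E → ℂ}
    (hu : ∀ i, ContDiff ℝ ∞ (u i)) (hcover : ∀ x ∈ tsupport g, ∃ i, u i x ≠ 0) :
    ∃ (s : Finset ι) (h : ι → E → ℂ), (∀ i, ContDiff ℝ ∞ (h i) ∧ HasCompactSupport (h i)) ∧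
      g = ∑ i ∈ s, h i * u i := by
  obtain ⟨s, hs⟩ := hgc.elim_finite_subcover (fun i ↦ {x | u i x ≠ 0})
    (fun i ↦ isOpen_ne_fun (hu i).continuous continuous_const)
    fun x hx ↦ Set.mem_iUnion.2 (hcover x hx)
  have hconj : ∀ i, ContDiff ℝ ∞ fun x ↦ (starRingEnd ℂ) (u i x) :=
    fun i ↦ Complex.conjCLE.contDiff.comp (hu i)
  set d : E → ℂ := fun x ↦ ∑ i ∈ s, u i x * (starRingEnd ℂ) (u i x)
  have hd_ne : ∀ x ∈ tsupport g, d x ≠ 0 := by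
    intro x hx
    obtain ⟨i, hi, hix⟩ := Set.mem_iUnion₂.1 (hs hx)
    simp_rw [d, Complex.mul_conj, ← Complex.ofReal_sum, Complex.ofReal_ne_zero]
    exact (Finset.sum_pos' (fun j _ ↦ Complex.normSq_nonneg (u j x))
      ⟨i, hi, Complex.normSq_pos.2 hix⟩).ne'
  refine ⟨s, fun i x ↦ g x * (starRingEnd ℂ) (u i x) / d x, fun i ↦ ⟨?_, ?_⟩, ?_⟩
  · exact (hg.mul (hconj i)).div_of_ne_zero_on_tsupport
      (ContDiff.sum fun j _ ↦ (hu j).mul (hconj j))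
      fun x hx ↦ hd_ne x (tsupport_mul_subset_left hx)
  · exact hgc.mono fun x hx hgx ↦ hx (by simp [hgx])
  · ext x
    simp only [Finset.sum_apply, Pi.mul_apply]
    by_cases hx : x ∈ tsupport g
    · calc g x = g x / d x * d x := (div_mul_cancel₀ _ (hd_ne x hx)).symm
        _ = _ := by rw [Finset.mul_sum]; exact Finset.sum_congr rfl fun i _ ↦ by ring
    · simp [image_eq_zero_of_notMem_tsupport hx]

theorem _root_.Real.fourierInv_comp_div {E : Type*} [NormedAddCommGroup E] [NormedSpace ℂ E]
    (g : ℝ → E) {c : ℝ} (hc : c ≠ 0) (t : ℝ) :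
    𝓕⁻ (fun ξ ↦ g (ξ / c)) t = |c| • 𝓕⁻ g (c * t) := by
  simp only [Real.fourierInv_eq]
  rw [← Measure.integral_comp_div (fun u ↦ 𝐞 (inner ℝ u (c * t)) • g u) c]
  congr! 4 with ξ
  simp only [RCLike.inner_apply, Real.ringHom_apply]
  field_simp

theorem exists_dilations_hasCompactSupport_fourier :
    ∃ φ : 𝓢(ℝ, ℂ), ∫ t, φ t = 1 ∧ ∃ Φ : ℕ → 𝓢(ℝ, ℂ), (∀ n, HasCompactSupport (𝓕 (Φ n : ℝ → ℂ))) ∧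
      ∀ n t, Φ n t = ((n : ℝ) + 1) • φ (((n : ℝ) + 1) * t) := by
  let b : ContDiffBump (0 : ℝ) := ⟨1, 2, one_pos, one_lt_two⟩
  let ψ : ℕ → ℝ → ℂ := fun n ξ ↦ (b (ξ / ((n : ℝ) + 1)) : ℂ)
  have hψ : ∀ n, HasCompactSupport (ψ n) ∧ ContDiff ℝ ∞ (ψ n) := fun n ↦
    ⟨by
      have := (b.hasCompactSupport.comp_left (g := ((↑) : ℝ → ℂ)) Complex.ofReal_zero).comp_smul
        (inv_ne_zero (by positivity : (n : ℝ) + 1 ≠ 0))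
      simpa [ψ, div_eq_inv_mul] using this,
    Complex.ofRealCLM.contDiff.comp (b.contDiff.comp (contDiff_id.div_const _))⟩
  let Φ : ℕ → 𝓢(ℝ, ℂ) := fun n ↦ 𝓕⁻ ((hψ n).1.toSchwartzMap (hψ n).2)
  have hΦ : ∀ n, 𝓕 (Φ n : ℝ → ℂ) = ψ n := fun n ↦ by
    simp [Φ, ← SchwartzMap.fourier_coe]; rfl
  refine ⟨Φ 0, ?_, Φ, fun n ↦ hΦ n ▸ (hψ n).1, fun n t ↦ ?_⟩
  · calc ∫ t, Φ 0 t = 𝓕 (Φ 0 : ℝ → ℂ) 0 := by simp [Real.fourier_real_eq_integral_exp_smul]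
      _ = 1 := by simp [hΦ, ψ, b.one_of_mem_closedBall (Metric.mem_closedBall_self zero_le_one)]
  · have hψn : ψ n = fun ξ ↦ ψ 0 (ξ / ((n : ℝ) + 1)) := by simp [ψ]
    simp only [Φ, SchwartzMap.fourierInv_coe]
    change 𝓕⁻ (ψ n) t = ((n : ℝ) + 1) • 𝓕⁻ (ψ 0) (((n : ℝ) + 1) * t)
    rw [hψn, Real.fourierInv_comp_div _ (by positivity), abs_of_pos (by positivity)]

section Smear

variable {α : ℝ → V →L[ℂ] V} {v : V} {C : ℝ} {N : ℕ}

/-- The weight `(1 + ‖t‖) ^ N` is submultiplicative, which the Fubini argument for convolutions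
needs. -/
theorem PtwisePolyBdd.exists_bound (hpb : PtwisePolyBdd α) (v : V) :
    ∃ (C : ℝ) (N : ℕ), ∀ t : ℝ, ‖α t v‖ ≤ C * (1 + ‖t‖) ^ N := by
  obtain ⟨C, hC, N, hb⟩ := hpb v
  refine ⟨2 * C, N, fun t ↦ (hb t).trans ?_⟩
  have h1 : (1 : ℝ) ≤ (1 + ‖t‖) ^ N := one_le_pow₀ (by simp)
  have h2 : |t| ^ N ≤ (1 + ‖t‖) ^ N := by gcongr; simp
  nlinarith

theorem integrable_smear_integrand (hsc : StronglyCts α) (hb : ∀ t, ‖α t v‖ ≤ C * (1 + ‖t‖) ^ N)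
    (f : 𝓢(ℝ, ℂ)) : Integrable fun t ↦ f t • α t v := by
  refine ((f.integrable_one_add_norm_pow_mul N).const_mul C).mono'
    (f.continuous.smul (hsc v)).aestronglyMeasurable (.of_forall fun t ↦ ?_)
  rw [norm_smul]
  calc ‖f t‖ * ‖α t v‖ ≤ ‖f t‖ * (C * (1 + ‖t‖) ^ N) := by gcongr; exact hb t
    _ = C * ((1 + ‖t‖) ^ N * ‖f t‖) := by ring

theorem smear_add (hsc : StronglyCts α) (hb : ∀ t, ‖α t v‖ ≤ C * (1 + ‖t‖) ^ N)
    (f g : 𝓢(ℝ, ℂ)) : smear α (f + g) v = smear α f v + smear α g v := by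
  simp only [smear, add_apply, add_smul]
  exact integral_add (integrable_smear_integrand hsc hb f) (integrable_smear_integrand hsc hb g)

theorem apply_smear [CompleteSpace V] (hgrp : IsOneParamGroup α) (hsc : StronglyCts α)
    (hb : ∀ t, ‖α t v‖ ≤ C * (1 + ‖t‖) ^ N) (f : 𝓢(ℝ, ℂ)) (s : ℝ) :
    α s (smear α f v) = ∫ t, f t • α (s + t) v := by
  rw [smear, ← (α s).integral_comp_comm (integrable_smear_integrand hsc hb f)]
  simp [hgrp.2]

theorem integrable_convolution_smear_integrand (hsc : StronglyCts α)
    (hb : ∀ t, ‖α t v‖ ≤ C * (1 + ‖t‖) ^ N) (k f : 𝓢(ℝ, ℂ)) :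
    Integrable (Function.uncurry fun t s ↦ (k s * f (t - s)) • α t v) (volume.prod volume) := by
  have hG : Integrable (fun z : ℝ × ℝ ↦ (k z.2 * f z.1) • α (z.1 + z.2) v)
      (volume.prod volume) := by
    refine (((f.integrable_one_add_norm_pow_mul N).mul_prod
      (k.integrable_one_add_norm_pow_mul N)).const_mul C).mono'
      (by have := hsc v; fun_prop) (.of_forall fun z ↦ ?_)
    have hC : 0 ≤ C := by simpa using (norm_nonneg _).trans (hb 0)
    have hweight : (1 + ‖z.1 + z.2‖) ^ N ≤ (1 + ‖z.1‖) ^ N * (1 + ‖z.2‖) ^ N := by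
      rw [← mul_pow]
      gcongr
      nlinarith [norm_add_le z.1 z.2, norm_nonneg z.1, norm_nonneg z.2]
    calc ‖(k z.2 * f z.1) • α (z.1 + z.2) v‖
        ≤ ‖k z.2‖ * ‖f z.1‖ * (C * (1 + ‖z.1 + z.2‖) ^ N) := by
          rw [norm_smul, norm_mul]; gcongr; exact hb _
      _ ≤ ‖k z.2‖ * ‖f z.1‖ * (C * ((1 + ‖z.1‖) ^ N * (1 + ‖z.2‖) ^ N)) := by gcongr
      _ = _ := by ring
  refine ((measurePreserving_add_prod volume volume).integrable_comp ?_).1 ?_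
  · exact Continuous.aestronglyMeasurable (by have := hsc v; fun_prop)
  · simpa [Function.comp_def] using hG

theorem smear_convolution [CompleteSpace V] (hgrp : IsOneParamGroup α) (hsc : StronglyCts α)
    (hb : ∀ t, ‖α t v‖ ≤ C * (1 + ‖t‖) ^ N) (k f : 𝓢(ℝ, ℂ)) :
    smear α (SchwartzMap.convolution (ContinuousLinearMap.mul ℂ ℂ) k f) v =
      ∫ s, k s • α s (smear α f v) := by
  calc smear α (SchwartzMap.convolution (ContinuousLinearMap.mul ℂ ℂ) k f) v
      = ∫ t, ∫ s, (k s * f (t - s)) • α t v := by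
        simp only [smear, SchwartzMap.convolution_apply, convolution_def,
          ContinuousLinearMap.mul_apply', integral_smul_const]
    _ = ∫ s, ∫ t, (k s * f (t - s)) • α t v :=
        integral_integral_swap (integrable_convolution_smear_integrand hsc hb k f)
    _ = ∫ s, k s • ∫ x, f x • α (s + x) v := by
        refine integral_congr_ae (.of_forall fun s ↦ ?_)
        simp only [mul_smul, integral_smul]
        rw [← integral_add_left_eq_self (fun t ↦ f (t - s) • α t v) s]
        simp only [add_sub_cancel_left]
    _ = ∫ s, k s • α s (smear α f v) := by
        simp only [apply_smear hgrp hsc hb]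

theorem smear_zero : smear α 0 v = 0 := by
  simp [smear]

theorem smear_eq_zero_of_hasCompactSupport_fourier [CompleteSpace V] (hgrp : IsOneParamGroup α)
    (hsc : StronglyCts α) (hb : ∀ t, ‖α t v‖ ≤ C * (1 + ‖t‖) ^ N) {g : 𝓢(ℝ, ℂ)}
    (hg : HasCompactSupport (𝓕 (g : ℝ → ℂ)))
    (hcover : ∀ ξ ∈ tsupport (𝓕 (g : ℝ → ℂ)),
      ∃ f : 𝓢(ℝ, ℂ), smear α f v = 0 ∧ 𝓕 (f : ℝ → ℂ) ξ ≠ 0) :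
    smear α g v = 0 := by
  obtain ⟨s, h, hh, hsum⟩ := hg.exists_eq_sum_mul (𝓕 g).smooth'
    (u := fun f : {f : 𝓢(ℝ, ℂ) // smear α f v = 0} ↦ 𝓕 (f.1 : ℝ → ℂ)) (fun f ↦ (𝓕 f.1).smooth')
    fun ξ hξ ↦ by obtain ⟨f, hf, hfξ⟩ := hcover ξ hξ; exact ⟨⟨f, hf⟩, hfξ⟩
  set k := fun i ↦ 𝓕⁻ ((hh i).2.toSchwartzMap (hh i).1)
  have hg_eq : g = ∑ i ∈ s, SchwartzMap.convolution (ContinuousLinearMap.mul ℂ ℂ) (k i) i.1 := by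
    have : 𝓕 g = 𝓕 (∑ i ∈ s, SchwartzMap.convolution (ContinuousLinearMap.mul ℂ ℂ) (k i) i.1) := by
      ext ξ
      simpa [FourierTransform.fourier_sum, SchwartzMap.fourier_convolution, k,
        SchwartzMap.fourier_coe] using congrFun hsum ξ
    simpa using congrArg 𝓕⁻ this
  rw [hg_eq]
  refine Finset.sum_induction _ (fun f ↦ smear α f v = 0)
    (fun f₁ f₂ h₁ h₂ ↦ by rw [smear_add hsc hb, h₁, h₂, add_zero]) smear_zero fun i _ ↦ ?_
  simp [smear_convolution hgrp hsc hb, i.2]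

theorem smear_dilation {φ : 𝓢(ℝ, ℂ)} {Φ : ℕ → 𝓢(ℝ, ℂ)}
    (hΦ : ∀ n t, Φ n t = ((n : ℝ) + 1) • φ (((n : ℝ) + 1) * t)) (n : ℕ) :
    smear α (Φ n) v = ∫ u, φ u • α (u / ((n : ℝ) + 1)) v := by
  have hc : (0 : ℝ) < n + 1 := by positivity
  calc smear α (Φ n) v
      = ∫ t, ((n : ℝ) + 1) • (fun u ↦ φ u • α (u / ((n : ℝ) + 1)) v) (((n : ℝ) + 1) * t) := by
        refine integral_congr_ae (.of_forall fun t ↦ ?_)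
        simp only [hΦ, smul_assoc, mul_div_cancel_left₀ _ hc.ne']
    _ = ∫ u, φ u • α (u / ((n : ℝ) + 1)) v := by
        rw [integral_smul,
          Measure.integral_comp_mul_left (fun u ↦ φ u • α (u / ((n : ℝ) + 1)) v),
          abs_of_pos (inv_pos.2 hc), smul_inv_smul₀ hc.ne']

theorem tendsto_smear_dilation [CompleteSpace V] (hα0 : α 0 = ContinuousLinearMap.id ℂ V)
    (hsc : StronglyCts α) (hb : ∀ t, ‖α t v‖ ≤ C * (1 + ‖t‖) ^ N) {φ : 𝓢(ℝ, ℂ)} (hφ : ∫ t, φ t = 1)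
    {Φ : ℕ → 𝓢(ℝ, ℂ)} (hΦ : ∀ n t, Φ n t = ((n : ℝ) + 1) • φ (((n : ℝ) + 1) * t)) :
    Tendsto (fun n ↦ smear α (Φ n) v) atTop (𝓝 v) := by
  have hC : 0 ≤ C := by simpa using (norm_nonneg _).trans (hb 0)
  have hlim := tendsto_integral_of_dominated_convergence (fun u ↦ C * ((1 + ‖u‖) ^ N * ‖φ u‖))
    (F := fun (n : ℕ) u ↦ φ u • α (u / ((n : ℝ) + 1)) v) (f := fun u ↦ φ u • v)
    (fun n ↦ (φ.continuous.smul ((hsc v).comp (continuous_id.div_const _))).aestronglyMeasurable)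
    ((φ.integrable_one_add_norm_pow_mul (μ := volume) N).const_mul C)
    (fun n ↦ .of_forall fun u ↦ ?_) (.of_forall fun u ↦ ?_)
  · rw [integral_smul_const, hφ, one_smul] at hlim
    exact hlim.congr fun n ↦ (smear_dilation hΦ n).symm
  · have hu : ‖u / ((n : ℝ) + 1)‖ ≤ ‖u‖ := by
      rw [norm_div]
      exact div_le_self (norm_nonneg u) (by simp [abs_of_pos (by positivity : (0 : ℝ) < n + 1)])
    calc ‖φ u • α (u / ((n : ℝ) + 1)) v‖
        ≤ ‖φ u‖ * (C * (1 + ‖u / ((n : ℝ) + 1)‖) ^ N) := by rw [norm_smul]; gcongr; exact hb _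
      _ ≤ ‖φ u‖ * (C * (1 + ‖u‖) ^ N) := by gcongr
      _ = C * ((1 + ‖u‖) ^ N * ‖φ u‖) := by ring
  · have hshrink : Tendsto (fun n : ℕ ↦ u / ((n : ℝ) + 1)) atTop (𝓝 0) :=
      tendsto_const_nhds.div_atTop (tendsto_natCast_atTop_atTop.atTop_add tendsto_const_nhds)
    have := ((hsc v).tendsto 0).comp hshrink
    rw [hα0, ContinuousLinearMap.id_apply] at this
    exact tendsto_const_nhds.smul this

theorem eq_zero_of_forall_hasCompactSupport_fourier_smear_eq_zero [CompleteSpace V]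
    (hα0 : α 0 = ContinuousLinearMap.id ℂ V) (hsc : StronglyCts α)
    (hb : ∀ t, ‖α t v‖ ≤ C * (1 + ‖t‖) ^ N)
    (hvanish : ∀ g : 𝓢(ℝ, ℂ), HasCompactSupport (𝓕 (g : ℝ → ℂ)) → smear α g v = 0) : v = 0 := by
  obtain ⟨φ, hφ, Φ, hΦc, hΦ⟩ := exists_dilations_hasCompactSupport_fourier
  refine tendsto_nhds_unique (tendsto_smear_dilation hα0 hsc hb hφ hΦ) ?_
  simp [hvanish _ (hΦc _)]

end Smear

theorem fourier_eq_fourierT (f : 𝓢(ℝ, ℂ)) (ξ : ℝ) :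
    𝓕 (f : ℝ → ℂ) ξ = fourierT f (-(2 * Real.pi * ξ)) := by
  rw [Real.fourier_real_eq_integral_exp_smul, fourierT]
  congr! 2 with t
  rw [smul_eq_mul, mul_comm]
  congr 2
  push_cast
  ring

/-- If `α` is a strongly continuous, pointwise polynomially bounded one-parameter group on a
complex Banach space `V` and `α_f(v) = 0` for every Schwartz function `f`, then `v = 0`.
Consequently, `v ≠ 0` implies `Spec_α(v) ≠ ∅`. -/
theorem eq_zero_of_smear_eq_zero_and_spec_nonempty
    {V : Type*} [NormedAddCommGroup V] [NormedSpace ℂ V] [CompleteSpace V]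
    (α : ℝ → V →L[ℂ] V) (hgrp : IsOneParamGroup α)
    (hsc : StronglyCts α) (hpb : PtwisePolyBdd α) (v : V) :
    ((∀ f : SchwartzMap ℝ ℂ, smear α f v = 0) → v = 0) ∧
    (v ≠ 0 → (arvSpec α v).Nonempty) := by
  obtain ⟨C, N, hb⟩ := hpb.exists_bound v
  have hzero := eq_zero_of_forall_hasCompactSupport_fourier_smear_eq_zero hgrp.1 hsc hb
  refine ⟨fun h ↦ hzero fun g _ ↦ h g, fun hv ↦ ?_⟩
  by_contra hempty
  refine hv (hzero fun g hg ↦ smear_eq_zero_of_hasCompactSupport_fourier hgrp hsc hb hg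
    fun ξ _ ↦ ?_)
  have hξ : -(2 * Real.pi * ξ) ∉ arvSpec α v := fun hp ↦ hempty ⟨_, hp⟩
  simp only [arvSpec, Set.mem_ofPred_eq, not_forall] at hξ
  obtain ⟨f, hf, hfξ⟩ := hξ
  exact ⟨f, hf, by rwa [fourier_eq_fourierT]⟩

end ArvesonPaper
end
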